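/- Let k ≥ 2 be an integer and let v = (v₁, v₂) be a polynomial vector field whose components have total degree at most k+1, such that v₁ and v₂ vanish at the origin and div v := ∂₁v₁ + ∂₂v₂ vanishes at the origin. Then there exists a symmetric polynomial matrix τ whose entries have total degree at most k such that v = τ x^⊥. -/
import Mathlib


open MvPolynomial Matrix

/-- Real polynomials in two variables. -/
abbrev P2 := MvPolynomial (Fin 2) ℝ

/-- The matrix `curl v` of a polynomial vector field, defined row-wise:
`(curl v)_{i1} = ∂₂ vᵢ`, `(curl v)_{i2} = -∂₁ vᵢ`. -/
noncomputable def pcurl (v : Fin 2 → P2) : Matrix (Fin 2) (Fin 2) P2 :=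
  Matrix.of fun i j =>
    if j = 0 then pderiv (1 : Fin 2) (v i) else -(pderiv (0 : Fin 2) (v i))

/-- `sym curl v := (curl v + (curl v)ᵀ)/2`. -/
noncomputable def psymCurl (v : Fin 2 → P2) : Matrix (Fin 2) (Fin 2) P2 :=
  (1 / 2 : ℝ) • (pcurl v + (pcurl v)ᵀ)

/-- `div div τ := Σ_{i,j} ∂ᵢ∂ⱼ τ_{ij}`. -/
noncomputable def pdivDiv (τ : Matrix (Fin 2) (Fin 2) P2) : P2 :=
  ∑ i : Fin 2, ∑ j : Fin 2, pderiv i (pderiv j (τ i j))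

/-- The matrix `x xᵀ q` with `(i,j)`-entry `Xᵢ · Xⱼ · q`. -/
noncomputable def xxT (q : P2) : Matrix (Fin 2) (Fin 2) P2 :=
  Matrix.of fun i j => X i * X j * q

/-- The polynomial vector `x^⊥ = (X₂, -X₁)`. -/
noncomputable def xPerp : Fin 2 → P2 := ![X 1, -X 0]

/-- `rot τ`, with components `(rot τ)ᵢ = ∂₁ τ_{i2} - ∂₂ τ_{i1}`. -/
noncomputable def prot (τ : Matrix (Fin 2) (Fin 2) P2) : Fin 2 → P2 :=
  fun i => pderiv (0 : Fin 2) (τ i 1) - pderiv (1 : Fin 2) (τ i 0)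

/-- The Hessian matrix `∇²q` with entries `∂ᵢ∂ⱼ q`. -/
noncomputable def phess (q : P2) : Matrix (Fin 2) (Fin 2) P2 :=
  Matrix.of fun i j => pderiv i (pderiv j q)

/-- `sym(x^⊥ ⊗ v)`, the symmetric matrix with `(i,j)`-entry
`((x^⊥)ᵢ vⱼ + vᵢ (x^⊥)ⱼ)/2`. -/
noncomputable def symTen (v : Fin 2 → P2) : Matrix (Fin 2) (Fin 2) P2 :=
  Matrix.of fun i j => (1 / 2 : ℝ) • (xPerp i * v j + v i * xPerp j)

/-- The gradient matrix `∇v` with entries `(∇v)_{ij} = ∂ⱼ vᵢ`. -/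
noncomputable def pgrad (v : Fin 2 → P2) : Matrix (Fin 2) (Fin 2) P2 :=
  Matrix.of fun i j => pderiv j (v i)

/-- The symmetric gradient `def v := (∇v + (∇v)ᵀ)/2`. -/
noncomputable def pdef (v : Fin 2 → P2) : Matrix (Fin 2) (Fin 2) P2 :=
  (1 / 2 : ℝ) • (pgrad v + (pgrad v)ᵀ)

/-- The matrix `x^⊥ (x^⊥)ᵀ q` with `(i,j)`-entry `(x^⊥)ᵢ (x^⊥)ⱼ q`. -/
noncomputable def xPerpxPerpT (q : P2) : Matrix (Fin 2) (Fin 2) P2 :=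
  Matrix.of fun i j => xPerp i * xPerp j * q

/-- `rot rot τ := ∂₁(rot τ)₂ − ∂₂(rot τ)₁`. -/
noncomputable def protRot (τ : Matrix (Fin 2) (Fin 2) P2) : P2 :=
  pderiv (0 : Fin 2) (prot τ 1) - pderiv (1 : Fin 2) (prot τ 0)


namespace Stmt10Aux

open MvPolynomial

/-- The substitution sending `X j` to `0` and fixing the other variable. -/
noncomputable def kill (j : Fin 2) : Fin 2 → P2 := fun i => if i = j then 0 else X i

lemma kill_self (j : Fin 2) : kill j j = 0 := if_pos rfl

lemma kill_ne {i j : Fin 2} (h : i ≠ j) : kill j i = X i := if_neg h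

lemma kill_dvd (j : Fin 2) (p : P2) : X j ∣ p - aeval (kill j) p := by
  induction p using MvPolynomial.induction_on with
  | C a => simp [algebraMap_eq]
  | add p q hp hq =>
      have h : p + q - aeval (kill j) (p + q)
          = (p - aeval (kill j) p) + (q - aeval (kill j) q) := by
        rw [_root_.map_add]; ring
      rw [h]; exact dvd_add hp hq
  | mul_X p i hp =>
      rcases eq_or_ne i j with rfl | hij
      · rw [_root_.map_mul, aeval_X, kill_self, mul_zero, sub_zero]
        exact dvd_mul_left _ _
      · rw [_root_.map_mul, aeval_X, kill_ne hij,
          show p * X i - aeval (kill j) p * X i = (p - aeval (kill j) p) * X i by ring]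
        exact hp.mul_right _

lemma kill_totalDegree (j : Fin 2) (p : P2) :
    (aeval (kill j) p).totalDegree ≤ p.totalDegree := by
  conv_lhs => rw [p.as_sum]
  rw [_root_.map_sum]
  refine (totalDegree_finset_sum _ _).trans (Finset.sup_le fun m hm => ?_)
  rw [aeval_monomial, algebraMap_eq]
  refine (totalDegree_mul _ _).trans ?_
  rw [totalDegree_C, zero_add]
  refine le_trans ?_ (le_totalDegree hm)
  rw [Finsupp.prod]
  refine (totalDegree_finset_prod _ _).trans ?_
  rw [Finsupp.sum]
  refine Finset.sum_le_sum fun i _ => ?_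
  refine (totalDegree_pow _ _).trans ?_
  have hk : (kill j i).totalDegree ≤ 1 := by
    unfold kill; split
    · simp
    · exact (totalDegree_X _).le
  calc m i * (kill j i).totalDegree ≤ m i * 1 := Nat.mul_le_mul_left _ hk
    _ = m i := mul_one _

lemma kill_pderiv {i j : Fin 2} (h : i ≠ j) (p : P2) :
    pderiv i (aeval (kill j) p) = aeval (kill j) (pderiv i p) := by
  induction p using MvPolynomial.induction_on with
  | C a => simp [algebraMap_eq]
  | add p q hp hq => simp only [_root_.map_add, hp, hq]
  | mul_X p l hp =>
      rcases eq_or_ne l j with rfl | hlj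
      · rw [_root_.map_mul, aeval_X, kill_self, mul_zero, _root_.map_zero, pderiv_mul,
          pderiv_X_of_ne h.symm, mul_zero, add_zero, _root_.map_mul, aeval_X, kill_self,
          mul_zero]
      · rcases eq_or_ne l i with rfl | hli
        · rw [_root_.map_mul, aeval_X, kill_ne hlj, pderiv_mul, pderiv_X_self, mul_one,
            pderiv_mul, pderiv_X_self, mul_one, _root_.map_add, _root_.map_mul, aeval_X,
            kill_ne hlj, hp]
        · rw [_root_.map_mul, aeval_X, kill_ne hlj, pderiv_mul, pderiv_X_of_ne hli,
            mul_zero, add_zero, pderiv_mul, pderiv_X_of_ne hli, mul_zero, add_zero,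
            _root_.map_mul, aeval_X, kill_ne hlj, hp]

lemma kill_kill (j : Fin 2) (p : P2) :
    aeval (kill j) (aeval (kill j) p) = aeval (kill j) p := by
  rw [comp_aeval_apply]
  have h : (fun i => aeval (kill j) (kill j i)) = kill j := by
    funext i
    rcases eq_or_ne i j with rfl | hij
    · simp [kill_self]
    · simp [kill_ne hij]
  rw [h]

lemma kill01 (p : P2) : aeval (kill 0) (aeval (kill 1) p) = C (eval 0 p) := by
  rw [comp_aeval_apply]
  have h : (fun i => aeval (kill 0) (kill 1 i)) = (0 : Fin 2 → P2) := by
    funext i; fin_cases i <;> simp [kill]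
  rw [h, aeval_zero, algebraMap_eq, eval_zero]

lemma kill10 (p : P2) : aeval (kill 1) (aeval (kill 0) p) = C (eval 0 p) := by
  rw [comp_aeval_apply]
  have h : (fun i => aeval (kill 1) (kill 0 i)) = (0 : Fin 2 → P2) := by
    funext i; fin_cases i <;> simp [kill]
  rw [h, aeval_zero, algebraMap_eq, eval_zero]

lemma eval0_kill (j : Fin 2) (q : P2) :
    eval (0 : Fin 2 → ℝ) (aeval (kill j) q) = eval 0 q := by
  have h1 : (aeval (0 : Fin 2 → ℝ)) (aeval (kill j) q) = aeval (0 : Fin 2 → ℝ) q := by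
    rw [comp_aeval_apply]
    have h : (fun i => aeval (0 : Fin 2 → ℝ) (kill j i)) = (0 : Fin 2 → ℝ) := by
      funext i
      rcases eq_or_ne i j with rfl | hij
      · simp [kill_self]
      · simp [kill_ne hij]
    rw [h]
  simpa [aeval_zero, eval_zero] using h1

lemma deg_div {j : Fin 2} {q : P2} {n : ℕ} (h : (X j * q).totalDegree ≤ n + 1) :
    q.totalDegree ≤ n := by
  rcases eq_or_ne q 0 with rfl | hq
  · simp
  obtain ⟨m, hm, hdeg⟩ := Finset.exists_mem_eq_sup q.support
    (support_nonempty.mpr hq) (fun m : Fin 2 →₀ ℕ => m.sum fun _ e => e)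
  have hmem : Finsupp.single j 1 + m ∈ (X j * q).support := by
    rw [support_X_mul]
    exact Finset.mem_map.mpr ⟨m, hm, rfl⟩
  have h2 := (le_totalDegree hmem).trans h
  have hsum : ((Finsupp.single j 1 + m).sum fun _ e => e)
      = 1 + (m.sum fun _ e => e) := by
    rw [Finsupp.sum_add_index' (fun _ => rfl) (fun _ _ _ => rfl),
      Finsupp.sum_single_index rfl]
  rw [totalDegree, hdeg]
  omega

end Stmt10Aux

open Stmt10Aux in
/-- If a polynomial vector field of degree ≤ k+1 vanishes at the origin along
with its divergence, then it is of the form `τ x^⊥` for a symmetric polynomial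
matrix of degree ≤ k. -/
theorem stmt_10 (k : ℕ) (hk : 2 ≤ k) (v : Fin 2 → P2)
    (hdeg : ∀ i, (v i).totalDegree ≤ k + 1)
    (h0 : ∀ i, eval (0 : Fin 2 → ℝ) (v i) = 0)
    (hdiv : eval (0 : Fin 2 → ℝ)
      (pderiv (0 : Fin 2) (v 0) + pderiv (1 : Fin 2) (v 1)) = 0) :
    ∃ τ : Matrix (Fin 2) (Fin 2) P2,
      τᵀ = τ ∧ (∀ i j, (τ i j).totalDegree ≤ k) ∧ v = τ.mulVec xPerp := by
  classical
  -- substitution maps: A kills X₁ (index 1), B kills X₀ (index 0)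
  have h01 : (0 : Fin 2) ≠ 1 := by decide
  have h10 : (1 : Fin 2) ≠ 0 := by decide
  -- f : A (v 0) = X 0 * f
  have hdvd1 : X (0 : Fin 2) ∣ aeval (kill 1) (v 0) := by
    have := kill_dvd 0 (aeval (kill 1) (v 0))
    rwa [kill01, h0 0, _root_.map_zero, sub_zero] at this
  obtain ⟨f, hf⟩ := hdvd1
  -- g : B (v 1) = X 1 * g
  have hdvd2 : X (1 : Fin 2) ∣ aeval (kill 0) (v 1) := by
    have := kill_dvd 1 (aeval (kill 0) (v 1))
    rwa [kill10, h0 1, _root_.map_zero, sub_zero] at this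
  obtain ⟨g, hg⟩ := hdvd2
  -- A f = f and B g = g
  have hAf : aeval (kill 1) f = f := by
    apply mul_left_cancel₀ (X_ne_zero (0 : Fin 2))
    have := kill_kill 1 (v 0)
    rw [hf, _root_.map_mul, aeval_X, kill_ne h01] at this
    exact this
  have hBg : aeval (kill 0) g = g := by
    apply mul_left_cancel₀ (X_ne_zero (1 : Fin 2))
    have := kill_kill 0 (v 1)
    rw [hg, _root_.map_mul, aeval_X, kill_ne h10] at this
    exact this
  -- cross evaluations
  have hAg : aeval (kill 1) g = C (eval 0 g) := by
    conv_lhs => rw [← hBg]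
    exact kill10 g
  have hBf : aeval (kill 0) f = C (eval 0 f) := by
    conv_lhs => rw [← hAf]
    exact kill01 f
  -- constants and divergence
  have hf0 : eval (0 : Fin 2 → ℝ) f = eval 0 (pderiv (0 : Fin 2) (v 0)) := by
    have h3 : f + X 0 * pderiv (0 : Fin 2) f
        = aeval (kill 1) (pderiv (0 : Fin 2) (v 0)) := by
      rw [← kill_pderiv h01, hf, pderiv_mul, pderiv_X_self, one_mul]
    have h4 := congrArg (eval (0 : Fin 2 → ℝ)) h3
    rw [eval0_kill] at h4
    simpa using h4
  have hg0 : eval (0 : Fin 2 → ℝ) g = eval 0 (pderiv (1 : Fin 2) (v 1)) := by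
    have h3 : g + X 1 * pderiv (1 : Fin 2) g
        = aeval (kill 0) (pderiv (1 : Fin 2) (v 1)) := by
      rw [← kill_pderiv h10, hg, pderiv_mul, pderiv_X_self, one_mul]
    have h4 := congrArg (eval (0 : Fin 2 → ℝ)) h3
    rw [eval0_kill] at h4
    simpa using h4
  have hc : eval (0 : Fin 2 → ℝ) f + eval (0 : Fin 2 → ℝ) g = 0 := by
    rw [hf0, hg0]
    simpa [_root_.map_add] using hdiv
  -- the middle entry b
  set b : P2 := g - f + C (eval (0 : Fin 2 → ℝ) f) with hb
  have hAb : aeval (kill 1) b = -f := by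
    rw [hb, _root_.map_add, _root_.map_sub, hAg, hAf, aeval_C, algebraMap_eq]
    have hsum : (C (eval (0 : Fin 2 → ℝ) g) : P2) + C (eval (0 : Fin 2 → ℝ) f) = 0 := by
      rw [← _root_.map_add, show eval (0 : Fin 2 → ℝ) g + eval (0 : Fin 2 → ℝ) f = 0 by linarith,
        _root_.map_zero]
    linear_combination hsum
  have hBb : aeval (kill 0) b = g := by
    rw [hb, _root_.map_add, _root_.map_sub, hBg, hBf, aeval_C, algebraMap_eq]
    ring
  -- a : v 0 + b * X 0 = X 1 * a
  have hdvda : X (1 : Fin 2) ∣ v 0 + b * X 0 := by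
    have h5 : aeval (kill 1) (v 0 + b * X 0) = 0 := by
      rw [_root_.map_add, _root_.map_mul, aeval_X, kill_ne h01, hf, hAb]
      ring
    have := kill_dvd 1 (v 0 + b * X 0)
    rwa [h5, sub_zero] at this
  obtain ⟨a, ha⟩ := hdvda
  -- c : b * X 1 - v 1 = X 0 * c
  have hdvdc : X (0 : Fin 2) ∣ b * X 1 - v 1 := by
    have h5 : aeval (kill 0) (b * X 1 - v 1) = 0 := by
      rw [_root_.map_sub, _root_.map_mul, aeval_X, kill_ne h10, hBb, hg]
      ring
    have := kill_dvd 0 (b * X 1 - v 1)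
    rwa [h5, sub_zero] at this
  obtain ⟨c, hcc⟩ := hdvdc
  -- degree bounds
  have hdf : f.totalDegree ≤ k :=
    deg_div (j := 0) (n := k) (by rw [← hf]; exact (kill_totalDegree 1 (v 0)).trans (hdeg 0))
  have hdg : g.totalDegree ≤ k :=
    deg_div (j := 1) (n := k) (by rw [← hg]; exact (kill_totalDegree 0 (v 1)).trans (hdeg 1))
  have hdb : b.totalDegree ≤ k := by
    rw [hb]
    refine (totalDegree_add _ _).trans (max_le ((totalDegree_sub _ _).trans (max_le hdg hdf)) ?_)
    rw [totalDegree_C]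
    exact Nat.zero_le _
  have hda : a.totalDegree ≤ k := by
    refine deg_div (j := 1) (n := k) ?_
    rw [← ha]
    refine (totalDegree_add _ _).trans (max_le (hdeg 0) ?_)
    refine (totalDegree_mul _ _).trans ?_
    rw [totalDegree_X]
    omega
  have hdc : c.totalDegree ≤ k := by
    refine deg_div (j := 0) (n := k) ?_
    rw [← hcc]
    refine (totalDegree_sub _ _).trans (max_le ?_ (hdeg 1))
    refine (totalDegree_mul _ _).trans ?_
    rw [totalDegree_X]
    omega
  -- assemble the matrix
  refine ⟨Matrix.of ![![a, b], ![b, c]], ?_, ?_, ?_⟩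
  · ext i j
    fin_cases i <;> fin_cases j <;> rfl
  · intro i j
    fin_cases i <;> fin_cases j
    · exact hda
    · exact hdb
    · exact hdb
    · exact hdc
  · funext i
    fin_cases i
    · show v 0 = (Matrix.of ![![a, b], ![b, c]]).mulVec xPerp 0
      simp only [Matrix.mulVec, dotProduct, Fin.sum_univ_two, xPerp, Matrix.of_apply,
        Matrix.cons_val_zero, Matrix.cons_val_one, Matrix.head_cons]
      linear_combination ha
    · show v 1 = (Matrix.of ![![a, b], ![b, c]]).mulVec xPerp 1
      simp only [Matrix.mulVec, dotProduct, Fin.sum_univ_two, xPerp, Matrix.of_apply,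
        Matrix.cons_val_zero, Matrix.cons_val_one, Matrix.head_cons]
      linear_combination -hcc
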